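/- arXiv:1205.5244 — 5 statements merged into one kernel-verified Lean document; each statement's English description precedes it below -/
import Mathlib

section
/- For a Lipschitz curve X : [0,T] → ℝ³ with |Ẋ(s)| < 1 for all s, the set O_X^t = ⋃_{s ∈ [0,t], ω ∈ S²} {X(s) - s·ω} equals the closed ball B(X(t), t). -/
open Metric Set

/-!
If `g` is `1`-Lipschitz on `[0, t]`, then `‖g s - g t‖ ≤ t - s`, so the sphere of radius `s`
around `g s` lies in the closed ball of radius `t` around `g t`. Conversely, for `z` in that ball
the continuous function `s ↦ dist (g s) z - s` is `≥ 0` at `s = 0` and `≤ 0` at `s = t`, so by the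
intermediate value theorem `z` lies on the sphere of radius `s` around `g s` for some `s ∈ [0, t]`.
The speed bound `‖X'‖ < 1` makes `X` `1`-Lipschitz by the mean value theorem.
-/

theorem exists_dist_eq_of_mem_closedBall {α : Type*} [PseudoMetricSpace α] {g : ℝ → α} {t : ℝ}
    (hg : ContinuousOn g (Icc 0 t)) {z : α} (hz : z ∈ closedBall (g t) t) :
    ∃ s ∈ Icc 0 t, dist (g s) z = s := by
  have ht : 0 ≤ t := dist_nonneg.trans hz
  have hcont : ContinuousOn (fun s => dist (g s) z - s) (Icc 0 t) := by fun_prop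
  have hsign : (0 : ℝ) ∈ Icc (dist (g t) z - t) (dist (g 0) z - 0) :=
    ⟨by linarith [mem_closedBall'.1 hz], by simp⟩
  obtain ⟨s, hs, hs0⟩ := intermediate_value_Icc' ht hcont hsign
  exact ⟨s, hs, sub_eq_zero.1 hs0⟩

variable {E : Type*} [NormedAddCommGroup E] [NormedSpace ℝ E]

theorem sub_smul_mem_closedBall_of_lipschitzOnWith {g : ℝ → E} {s t : ℝ}
    (hg : LipschitzOnWith 1 g (Icc 0 t)) (hs : s ∈ Icc 0 t) {ω : E} (hω : ‖ω‖ = 1) :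
    g s - s • ω ∈ closedBall (g t) t := by
  have ht : t ∈ Icc 0 t := ⟨hs.1.trans hs.2, le_rfl⟩
  have hgst : dist (g s) (g t) ≤ t - s := by
    simpa [Real.dist_eq, abs_of_nonpos (sub_nonpos.2 hs.2)] using hg.dist_le_mul s hs t ht
  have hsω : ‖s • ω‖ = s := by rw [norm_smul, hω, Real.norm_of_nonneg hs.1, mul_one]
  calc dist (g s - s • ω) (g t)
      ≤ dist (g s - s • ω) (g s) + dist (g s) (g t) := dist_triangle _ _ _
    _ ≤ s + (t - s) := by rw [dist_self_sub_left, hsω]; gcongr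
    _ = t := add_sub_cancel _ _

theorem exists_norm_eq_one_eq_sub_smul_of_dist_eq [Nontrivial E] {x z : E} {s : ℝ}
    (hxz : dist x z = s) : ∃ ω : E, ‖ω‖ = 1 ∧ z = x - s • ω := by
  rcases eq_or_ne s 0 with rfl | hs
  · obtain ⟨ω, hω⟩ := exists_norm_eq E zero_le_one
    exact ⟨ω, hω, by rw [zero_smul, sub_zero, dist_eq_zero.1 hxz]⟩
  · have hs0 : 0 < s := (hxz ▸ dist_nonneg).lt_of_ne' hs
    refine ⟨s⁻¹ • (x - z), ?_, ?_⟩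
    · rw [norm_smul, ← dist_eq_norm, hxz, Real.norm_of_nonneg (inv_nonneg.2 hs0.le),
        inv_mul_cancel₀ hs]
    · rw [smul_smul, mul_inv_cancel₀ hs, one_smul, sub_sub_cancel]

theorem setOf_sub_smul_eq_closedBall_of_lipschitzOnWith [Nontrivial E] {g : ℝ → E} {t : ℝ}
    (hg : LipschitzOnWith 1 g (Icc 0 t)) :
    {z : E | ∃ s ∈ Icc 0 t, ∃ ω : E, ‖ω‖ = 1 ∧ z = g s - s • ω} = closedBall (g t) t := by
  ext z
  constructor
  · rintro ⟨s, hs, ω, hω, rfl⟩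
    exact sub_smul_mem_closedBall_of_lipschitzOnWith hg hs hω
  · intro hz
    obtain ⟨s, hs, hgs⟩ := exists_dist_eq_of_mem_closedBall hg.continuousOn hz
    exact ⟨s, hs, exists_norm_eq_one_eq_sub_smul_of_dist_eq hgs⟩

theorem lightcone_image_eq_closedBall_general
    (T : ℝ)
    (X X' : ℝ → EuclideanSpace ℝ (Fin 3))
    (hderiv : ∀ s ∈ Set.Icc (0:ℝ) T, HasDerivAt X (X' s) s)
    (hspeed : ∀ s ∈ Set.Icc (0:ℝ) T, ‖X' s‖ < 1)
    (t : ℝ) (ht : t ∈ Set.Icc (0:ℝ) T) :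
    {z : EuclideanSpace ℝ (Fin 3) |
        ∃ s ∈ Set.Icc (0:ℝ) t, ∃ ω : EuclideanSpace ℝ (Fin 3),
          ‖ω‖ = 1 ∧ z = X s - s • ω}
      = Metric.closedBall (X t) t := by
  have hsub : Icc 0 t ⊆ Icc 0 T := Icc_subset_Icc_right ht.2
  have hlip : LipschitzOnWith 1 X (Icc 0 t) :=
    (convex_Icc 0 t).lipschitzOnWith_of_nnnorm_hasDerivWithin_le
      (fun s hs => (hderiv s (hsub hs)).hasDerivWithinAt)
      (fun s hs => by exact_mod_cast (hspeed s (hsub hs)).le)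
  exact setOf_sub_smul_eq_closedBall_of_lipschitzOnWith hlip

/-- For a curve `X : [0,T] → ℝ³` with speed strictly less than 1
(particles slower than light), the backward light-cone image
`O_X^t = {X(s) - s•ω : s ∈ [0,t], ω ∈ S²}` equals the closed ball `B(X(t), t)`. -/
theorem lightcone_image_eq_closedBall
    (T : ℝ) (hT : 0 ≤ T)
    (X X' : ℝ → EuclideanSpace ℝ (Fin 3))
    (hderiv : ∀ s ∈ Set.Icc (0:ℝ) T, HasDerivAt X (X' s) s)
    (hspeed : ∀ s ∈ Set.Icc (0:ℝ) T, ‖X' s‖ < 1)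
    (t : ℝ) (ht : t ∈ Set.Icc (0:ℝ) T) :
    {z : EuclideanSpace ℝ (Fin 3) |
        ∃ s ∈ Set.Icc (0:ℝ) t, ∃ ω : EuclideanSpace ℝ (Fin 3),
          ‖ω‖ = 1 ∧ z = X s - s • ω}
      = Metric.closedBall (X t) t :=
  lightcone_image_eq_closedBall_general T X X' hderiv hspeed t ht
end

section
/- Let X, X^δ : [0,T] → ℝ³ be curves with |Ẋ(s)| ≤ 1 - 1/(CK) and |Ẋ^δ(s)| ≤ 1 - 1/(CK) for some constants C, K. Suppose for a point z we have z = X(s_X) - s_X·ω_X = X^δ(s_{X^δ}) - s_{X^δ}·ω_{X^δ} with ω_X, ω_{X^δ} ∈ S² and s_X, s_{X^δ} > 0. Then |s_X - s_{X^δ}| ≤ C·K · max_{s ≤ min(s_X, s_{X^δ})} |X(s) - X^δ(s)|. -/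
/-!
Both curves reach `z` along backward light cones, so `‖X(s_X) - z‖ = s_X` and
`‖X^δ(s_{X^δ}) - z‖ = s_{X^δ}`. If `s_{X^δ} ≤ s_X`, the triangle inequality through `X(s_{X^δ})`
gives `s_X - s_{X^δ} ≤ ‖X(s_X) - X(s_{X^δ})‖ + ‖X(s_{X^δ}) - X^δ(s_{X^δ})‖`, and the first term is at
most `(1 - 1/(CK)) (s_X - s_{X^δ})` by the speed bound. Absorbing it on the left leaves
`(s_X - s_{X^δ}) / (CK) ≤ ‖X(s_{X^δ}) - X^δ(s_{X^δ})‖`, so the estimate holds with `c = 1`.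
-/

open Set

theorem le_biSup_of_bddAbove_image {α β : Type*} [ConditionallyCompleteLattice β]
    {f : α → β} {S : Set α} (hf : BddAbove (f '' S)) {x : α} (hx : x ∈ S) :
    f x ≤ ⨆ y ∈ S, f y := by
  refine le_ciSup₂ (f := fun y (_ : y ∈ S) => f y) ?_ x hx
  convert hf using 1
  ext b
  simp [eq_comm]

theorem norm_sub_eq_of_eq_sub_smul {E : Type*} [NormedAddCommGroup E] [NormedSpace ℝ E]
    {x z ω : E} {s : ℝ} (hs : 0 ≤ s) (hω : ‖ω‖ = 1)
    (hz : z = x - s • ω) : ‖x - z‖ = s := by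
  rw [hz, sub_sub_cancel, norm_smul, hω, Real.norm_of_nonneg hs, mul_one]

theorem norm_image_sub_le_of_hasDerivAt_Icc {E : Type*} [NormedAddCommGroup E]
    [NormedSpace ℝ E] {f f' : ℝ → E} {a b v : ℝ} (hab : a ≤ b)
    (hf : ∀ t ∈ Icc a b, HasDerivAt f (f' t) t) (hf' : ∀ t ∈ Icc a b, ‖f' t‖ ≤ v) :
    ‖f b - f a‖ ≤ v * (b - a) := by
  have h := (convex_Icc a b).norm_image_sub_le_of_norm_hasDerivWithin_le
    (fun t ht => (hf t ht).hasDerivWithinAt) hf' (left_mem_Icc.2 hab) (right_mem_Icc.2 hab)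
  rwa [Real.norm_of_nonneg (sub_nonneg.2 hab)] at h

theorem one_sub_mul_sub_le_norm_sub_of_lightCone {E : Type*} [SeminormedAddCommGroup E]
    {X Y : ℝ → E} {z : E} {t₁ t₂ v : ℝ}
    (hX : ‖X t₂ - z‖ = t₂) (hY : ‖Y t₁ - z‖ = t₁)
    (hXv : ‖X t₂ - X t₁‖ ≤ v * (t₂ - t₁)) :
    (1 - v) * (t₂ - t₁) ≤ ‖X t₁ - Y t₁‖ := by
  have hcone : t₂ - t₁ ≤ ‖X t₂ - Y t₁‖ :=
    calc t₂ - t₁ = ‖X t₂ - z‖ - ‖Y t₁ - z‖ := by rw [hX, hY]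
      _ ≤ ‖(X t₂ - z) - (Y t₁ - z)‖ := norm_sub_norm_le _ _
      _ = ‖X t₂ - Y t₁‖ := by rw [sub_sub_sub_cancel_right]
  have htri := norm_sub_le_norm_sub_add_norm_sub (X t₂) (X t₁) (Y t₁)
  linarith

/-- retarded-time estimate.  If `X, X^δ` are curves with speed at most
`1 - 1/(CK)` and a point `z` is represented on the backward light cones of both curves,
`z = X(s_X) - s_X • ω_X = X^δ(s_{X^δ}) - s_{X^δ} • ω_{X^δ}`, then (with a universal
constant `c`)
`|s_X - s_{X^δ}| ≤ c C K · max_{s ≤ min(s_X, s_{X^δ})} |X(s) - X^δ(s)|`. -/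
theorem retarded_time_estimate :
    ∃ c : ℝ, 0 < c ∧
      ∀ (T C K : ℝ), 0 < T → 0 < C → 0 < K → 1 < C * K →
      ∀ (X Xδ X' Xδ' : ℝ → EuclideanSpace ℝ (Fin 3)),
      (∀ s ∈ Set.Icc (0:ℝ) T, HasDerivAt X (X' s) s) →
      (∀ s ∈ Set.Icc (0:ℝ) T, HasDerivAt Xδ (Xδ' s) s) →
      (∀ s ∈ Set.Icc (0:ℝ) T, ‖X' s‖ ≤ 1 - 1/(C*K)) →
      (∀ s ∈ Set.Icc (0:ℝ) T, ‖Xδ' s‖ ≤ 1 - 1/(C*K)) →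
      ∀ (z : EuclideanSpace ℝ (Fin 3)) (sX sXδ : ℝ)
        (ωX ωXδ : EuclideanSpace ℝ (Fin 3)),
      0 < sX → sX ≤ T → 0 < sXδ → sXδ ≤ T →
      ‖ωX‖ = 1 → ‖ωXδ‖ = 1 →
      z = X sX - sX • ωX → z = Xδ sXδ - sXδ • ωXδ →
      |sX - sXδ| ≤ c * C * K * ⨆ s ∈ Set.Icc (0:ℝ) (min sX sXδ), ‖X s - Xδ s‖ := by
  refine ⟨1, one_pos, fun T C K _ hC hK _ X Xδ X' Xδ' hX hXδ hX' hXδ' z sX sXδ ωX ωXδ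
    hsX hsXT hsXδ hsXδT hωX hωXδ hzX hzXδ => ?_⟩
  wlog hle : sXδ ≤ sX generalizing X Xδ X' Xδ' sX sXδ ωX ωXδ
  · have h := this Xδ X Xδ' X' hXδ hX hXδ' hX' sXδ sX ωXδ ωX hsXδ hsXδT hsX hsXT hωXδ hωX
      hzXδ hzX (le_of_not_ge hle)
    simpa only [abs_sub_comm, min_comm, norm_sub_rev] using h
  have hCK : 0 < C * K := mul_pos hC hK
  have hIcc : Icc sXδ sX ⊆ Icc 0 T := Icc_subset_Icc hsXδ.le hsXT
  have hgap := one_sub_mul_sub_le_norm_sub_of_lightCone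
    (norm_sub_eq_of_eq_sub_smul hsX.le hωX hzX) (norm_sub_eq_of_eq_sub_smul hsXδ.le hωXδ hzXδ)
    (norm_image_sub_le_of_hasDerivAt_Icc hle (fun t ht => hX t (hIcc ht))
      (fun t ht => hX' t (hIcc ht)))
  have hcont : ContinuousOn (fun s => ‖X s - Xδ s‖) (Icc 0 sXδ) := fun s hs =>
    have hs' : s ∈ Icc 0 T := ⟨hs.1, hs.2.trans hsXδT⟩
    ((hX s hs').continuousAt.sub (hXδ s hs').continuousAt).norm.continuousWithinAt
  have hsup := le_biSup_of_bddAbove_image (isCompact_Icc.image_of_continuousOn hcont).bddAbove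
    (right_mem_Icc.2 hsXδ.le)
  rw [min_eq_right hle, abs_of_nonneg (sub_nonneg.2 hle), one_mul, ← div_le_iff₀' hCK]
  calc (sX - sXδ) / (C * K) = (1 - (1 - 1 / (C * K))) * (sX - sXδ) := by ring
    _ ≤ _ := hgap.trans hsup
end

section
/- Under the same hypotheses as the retarded-time estimate, one also has |ω_X - ω_{X^δ}| ≤ C·K · (max_{s ≤ min(s_X, s_{X^δ})} |X(s) - X^δ(s)|) · (1/s_X + 1/s_{X^δ}). -/
/-!
Write `z = X(s_X) - s_X ω_X = X^δ(s_{X^δ}) - s_{X^δ} ω_{X^δ}` with `s_X ≤ s_{X^δ}`, let `L < 1`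
bound both speeds and `M` bound `|X - X^δ|` at time `s_X`. Comparing the two distances to `z`,
`s_{X^δ} - s_X ≤ |X^δ(s_{X^δ}) - X(s_X)| ≤ L (s_{X^δ} - s_X) + M`, so the retarded times differ by
at most `M / (1 - L)`. The identity `a (ω₁ - ω₂) = (a ω₁ - b ω₂) + (b - a) ω₂` then bounds
`s_X |ω_X - ω_{X^δ}|` by the same two quantities, i.e. by `2 M / (1 - L)`; with
`L = 1 - 1/(CK)` this is `2 C K M`.
-/

open Set

lemma le_biSup_of_isCompact {α : Type*} [TopologicalSpace α] {S : Set α} {f : α → ℝ}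
    (hS : IsCompact S) (hf : ContinuousOn f S) {x : α} (hx : x ∈ S) :
    f x ≤ ⨆ y ∈ S, f y :=
  le_ciSup₂ (f := fun y (_ : y ∈ S) => f y)
    ((hS.bddAbove_image hf).mono <| iUnion_subset fun _ =>
      range_subset_iff.2 fun hy => mem_image_of_mem f hy) x hx

lemma one_div_min_le_one_div_add_one_div {a b : ℝ} (ha : 0 < a) (hb : 0 < b) :
    1 / min a b ≤ 1 / a + 1 / b := by
  rcases min_choice a b with h | h <;> rw [h] <;> linarith [one_div_pos.2 ha, one_div_pos.2 hb]

section LightCone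

variable {E : Type*} [NormedAddCommGroup E] [NormedSpace ℝ E]

lemma mul_norm_sub_le_norm_smul_sub_smul_add {ω₁ ω₂ : E} {a b : ℝ} (ha : 0 ≤ a)
    (hω₂ : ‖ω₂‖ = 1) : a * ‖ω₁ - ω₂‖ ≤ ‖a • ω₁ - b • ω₂‖ + |b - a| := by
  have hsplit : a • (ω₁ - ω₂) = (a • ω₁ - b • ω₂) + (b - a) • ω₂ := by module
  calc a * ‖ω₁ - ω₂‖ = ‖a • (ω₁ - ω₂)‖ := by rw [norm_smul, Real.norm_of_nonneg ha]
    _ ≤ ‖a • ω₁ - b • ω₂‖ + ‖(b - a) • ω₂‖ := hsplit ▸ norm_add_le _ _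
    _ = ‖a • ω₁ - b • ω₂‖ + |b - a| := by rw [norm_smul, hω₂, mul_one, Real.norm_eq_abs]

/-- Two curves of speed at most `L` hit the point `z` of the backward light cone at times `a`
and `b` along directions `ω₁`, `ω₂`; `M` bounds their distance at the earlier time. -/
lemma min_mul_norm_sub_le_of_lightCone {γ δ : ℝ → E} {z ω₁ ω₂ : E} {a b L M : ℝ}
    (ha : 0 ≤ a) (hb : 0 ≤ b) (hL₀ : 0 ≤ L) (hL : L < 1)
    (hγ : ‖γ b - γ a‖ ≤ L * ‖b - a‖) (hδ : ‖δ b - δ a‖ ≤ L * ‖b - a‖)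
    (hM : ‖γ (min a b) - δ (min a b)‖ ≤ M) (hω₁ : ‖ω₁‖ = 1) (hω₂ : ‖ω₂‖ = 1)
    (hz₁ : z = γ a - a • ω₁) (hz₂ : z = δ b - b • ω₂) :
    min a b * ‖ω₁ - ω₂‖ ≤ 2 * M / (1 - L) := by
  wlog hab : a ≤ b generalizing γ δ ω₁ ω₂ a b
  · rw [min_comm, norm_sub_rev]
    rw [min_comm, norm_sub_rev] at hM
    rw [norm_sub_rev, norm_sub_rev b] at hγ hδ
    exact this hb ha hδ hγ hM hω₂ hω₁ hz₂ hz₁ (le_of_not_ge hab)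
  rw [min_eq_left hab] at hM ⊢
  have hω₁z : a • ω₁ = γ a - z := by rw [hz₁, sub_sub_cancel]
  have hω₂z : b • ω₂ = δ b - z := by rw [hz₂, sub_sub_cancel]
  have hdist₁ : ‖γ a - z‖ = a := by rw [← hω₁z, norm_smul, hω₁, mul_one, Real.norm_of_nonneg ha]
  have hdist₂ : ‖δ b - z‖ = b := by rw [← hω₂z, norm_smul, hω₂, mul_one, Real.norm_of_nonneg hb]
  have hchord : ‖δ b - γ a‖ ≤ L * (b - a) + M := by
    rw [Real.norm_of_nonneg (sub_nonneg.2 hab)] at hδ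
    calc ‖δ b - γ a‖ = ‖(δ b - δ a) + (δ a - γ a)‖ := by rw [sub_add_sub_cancel]
      _ ≤ L * (b - a) + M := norm_add_le_of_le hδ (norm_sub_rev (γ a) _ ▸ hM)
  have hretarded : b - a ≤ ‖δ b - γ a‖ := by
    simpa only [hdist₁, hdist₂, sub_sub_sub_cancel_right] using
      norm_sub_norm_le (δ b - z) (γ a - z)
  have htime : b - a ≤ M / (1 - L) := by
    rw [le_div_iff₀ (sub_pos.2 hL)]
    linarith
  have hangle := mul_norm_sub_le_norm_smul_sub_smul_add (ω₁ := ω₁) (b := b) ha hω₂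
  rw [hω₁z, hω₂z, sub_sub_sub_cancel_right, norm_sub_rev (γ a),
    abs_of_nonneg (sub_nonneg.2 hab)] at hangle
  have hsum : (1 + L) * (M / (1 - L)) + M = 2 * M / (1 - L) := by
    field_simp [(sub_pos.2 hL).ne']
    ring
  have hscaled := mul_le_mul_of_nonneg_left htime (by linarith : (0:ℝ) ≤ 1 + L)
  linarith

end LightCone

/-- angular estimate on the backward light cone.  Under the same
hypotheses as the retarded-time estimate, with a universal constant `c`,
`|ω_X - ω_{X^δ}| ≤ c C K · (max_{s ≤ min(s_X,s_{X^δ})} |X(s) - X^δ(s)|) · (1/s_X + 1/s_{X^δ})`. -/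
theorem retarded_angle_estimate :
    ∃ c : ℝ, 0 < c ∧
      ∀ (T C K : ℝ), 0 < T → 0 < C → 0 < K → 1 < C * K →
      ∀ (X Xδ X' Xδ' : ℝ → EuclideanSpace ℝ (Fin 3)),
      (∀ s ∈ Set.Icc (0:ℝ) T, HasDerivAt X (X' s) s) →
      (∀ s ∈ Set.Icc (0:ℝ) T, HasDerivAt Xδ (Xδ' s) s) →
      (∀ s ∈ Set.Icc (0:ℝ) T, ‖X' s‖ ≤ 1 - 1/(C*K)) →
      (∀ s ∈ Set.Icc (0:ℝ) T, ‖Xδ' s‖ ≤ 1 - 1/(C*K)) →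
      ∀ (z : EuclideanSpace ℝ (Fin 3)) (sX sXδ : ℝ)
        (ωX ωXδ : EuclideanSpace ℝ (Fin 3)),
      0 < sX → sX ≤ T → 0 < sXδ → sXδ ≤ T →
      ‖ωX‖ = 1 → ‖ωXδ‖ = 1 →
      z = X sX - sX • ωX → z = Xδ sXδ - sXδ • ωXδ →
      ‖ωX - ωXδ‖ ≤ c * C * K *
          (⨆ s ∈ Set.Icc (0:ℝ) (min sX sXδ), ‖X s - Xδ s‖) * (1/sX + 1/sXδ) := by
  refine ⟨2, two_pos, ?_⟩
  intro T C K _ hC hK hCK X Xδ X' Xδ' hX hXδ hX' hXδ' z sX sXδ ωX ωXδ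
    hsX hsXT hsXδ hsXδT hωX hωXδ hz₁ hz₂
  have hCK₀ : 0 < C * K := by positivity
  have hL₀ : 0 ≤ 1 - 1 / (C * K) := sub_nonneg.2 ((div_le_one hCK₀).2 hCK.le)
  have hL : 1 - 1 / (C * K) < 1 := sub_lt_self _ (one_div_pos.2 hCK₀)
  have hlip {f f' : ℝ → EuclideanSpace ℝ (Fin 3)} (hf : ∀ s ∈ Icc (0:ℝ) T, HasDerivAt f (f' s) s)
      (hf' : ∀ s ∈ Icc (0:ℝ) T, ‖f' s‖ ≤ 1 - 1 / (C * K)) :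
      ‖f sXδ - f sX‖ ≤ (1 - 1 / (C * K)) * ‖sXδ - sX‖ :=
    (convex_Icc 0 T).norm_image_sub_le_of_norm_hasDerivWithin_le
      (fun s hs => (hf s hs).hasDerivWithinAt) hf' ⟨hsX.le, hsXT⟩ ⟨hsXδ.le, hsXδT⟩
  set s₀ := min sX sXδ
  set M := ⨆ s ∈ Icc (0:ℝ) s₀, ‖X s - Xδ s‖
  have hs₀ : 0 < s₀ := lt_min hsX hsXδ
  have hM : ‖X s₀ - Xδ s₀‖ ≤ M := by
    refine le_biSup_of_isCompact (f := fun s => ‖X s - Xδ s‖) isCompact_Icc ?_ ⟨hs₀.le, le_rfl⟩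
    refine fun s hs => ((hX s ?_).continuousAt.sub (hXδ s ?_).continuousAt).norm.continuousWithinAt
      <;> exact ⟨hs.1, hs.2.trans ((min_le_left _ _).trans hsXT)⟩
  have hcone := min_mul_norm_sub_le_of_lightCone hsX.le hsXδ.le hL₀ hL (hlip hX hX')
    (hlip hXδ hXδ') hM hωX hωXδ hz₁ hz₂
  rw [sub_sub_cancel, div_div_eq_mul_div, div_one, ← le_div_iff₀' hs₀] at hcone
  calc ‖ωX - ωXδ‖ ≤ 2 * M * (C * K) / s₀ := hcone
    _ = 2 * C * K * M * (1 / s₀) := by ring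
    _ ≤ 2 * C * K * M * (1 / sX + 1 / sXδ) := by
      have hM₀ : 0 ≤ M := (norm_nonneg _).trans hM
      gcongr
      exact one_div_min_le_one_div_add_one_div hsX hsXδ
end

section
/- (Occupation-time bound near a resonant velocity) Let (X,V)(t,·,·) be a flow on ℝ × ℝ^d preserving Lebesgue measure, with trajectories contained in a compact set Ω̃ for initial data in a compact Ω and t ∈ [0,T]. Let α ∈ W^{1,∞}(ℝ^d) satisfy |{v : |α(v) - w| ≤ η}| ≤ Cη for all w ∈ ℝ, η > 0 (nondegeneracy). Define ω(w,η,K) = {(x,v) ∈ Ω : |{t ∈ [0,T] : |α(V(t,x,v)) - w| ≤ η}| ≥ Kη}. Then |ω(w,η,K)| ≤ C'/K with C' depending only on T, Ω̃, C (not on w, η). -/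
open MeasureTheory Set ENNReal

/-!
Measure the set of pairs `(p, t) ∈ Ω × [0, T]` with `|α (V(t, p)) - w| ≤ η` in two ways.
For fixed `t`, the flow maps its slice measure-preservingly into `Ω̃ ∩ (ℝ × {|α - w| ≤ η})`,
which has measure at most `C'' · C η` with `C''` the width of `Ω̃` in the `x`-direction; so the
set has measure at most `T C'' C η`. For each `p ∈ ω(w, η, K)` its slice has measure at least
`K η`, so by Chebyshev `K η |ω| ≤ T C'' C η`.
-/

section Occupation

variable {X τ : Type*} [MeasurableSpace X] [MeasurableSpace τ]
  {μ : Measure X} {ν : Measure τ} {φ : τ → X → X} {I : Set τ} {B : Set X}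

theorem measurableSet_occupation (hφ : Measurable (Function.uncurry φ))
    (hI : MeasurableSet I) (hB : MeasurableSet B) :
    MeasurableSet {q : X × τ | q.2 ∈ I ∧ φ q.2 q.1 ∈ B} :=
  (measurable_snd hI).inter ((hφ.comp measurable_swap) hB)

theorem lintegral_measure_occupation_le [SFinite μ] [SFinite ν] {Ω Ω' : Set X}
    (hφ : Measurable (Function.uncurry φ)) (hmp : ∀ t ∈ I, MeasurePreserving (φ t) μ μ)
    (hI : MeasurableSet I) (hB : MeasurableSet B) (hconf : ∀ p ∈ Ω, ∀ t ∈ I, φ t p ∈ Ω') :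
    ∫⁻ p in Ω, ν {t ∈ I | φ t p ∈ B} ∂μ ≤ ν I * μ (Ω' ∩ B) := by
  have hs := measurableSet_occupation hφ hI hB
  calc ∫⁻ p in Ω, ν {t ∈ I | φ t p ∈ B} ∂μ
      = ∫⁻ t, μ.restrict Ω {p | t ∈ I ∧ φ t p ∈ B} ∂ν :=
        (Measure.prod_apply hs).symm.trans (Measure.prod_apply_symm hs)
    _ ≤ ∫⁻ t, I.indicator (fun _ => μ (Ω' ∩ B)) t ∂ν := lintegral_mono fun t => ?_
    _ = ν I * μ (Ω' ∩ B) := by rw [lintegral_indicator_const hI, mul_comm]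
  by_cases ht : t ∈ I
  · simp only [ht, true_and, indicator_of_mem]
    calc μ.restrict Ω (φ t ⁻¹' B) = μ (φ t ⁻¹' B ∩ Ω) :=
          Measure.restrict_apply ((hmp t ht).measurable hB)
      _ ≤ μ (φ t ⁻¹' (Ω' ∩ B)) := measure_mono fun p hp => ⟨hconf p hp.2 t ht, hp.1⟩
      _ ≤ μ (Ω' ∩ B) := (hmp t ht).measure_preimage_le _
  · simp [ht]

theorem mul_measure_occupation_ge_le [SFinite μ] [SFinite ν] {Ω Ω' : Set X}
    (hφ : Measurable (Function.uncurry φ)) (hmp : ∀ t ∈ I, MeasurePreserving (φ t) μ μ)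
    (hI : MeasurableSet I) (hB : MeasurableSet B) (hconf : ∀ p ∈ Ω, ∀ t ∈ I, φ t p ∈ Ω')
    (c : ℝ≥0∞) :
    c * μ {p | p ∈ Ω ∧ c ≤ ν {t ∈ I | φ t p ∈ B}} ≤ ν I * μ (Ω' ∩ B) :=
  calc c * μ {p | p ∈ Ω ∧ c ≤ ν {t ∈ I | φ t p ∈ B}}
      ≤ c * μ.restrict Ω {p | c ≤ ν {t ∈ I | φ t p ∈ B}} := by
        rw [ofPred_and, ofPred_mem_eq, inter_comm]
        exact mul_le_mul_right (Measure.le_restrict_apply _ _) c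
    _ ≤ ∫⁻ p in Ω, ν {t ∈ I | φ t p ∈ B} ∂μ :=
        mul_meas_ge_le_lintegral
          (measurable_measure_prodMk_left (measurableSet_occupation hφ hI hB)) c
    _ ≤ ν I * μ (Ω' ∩ B) := lintegral_measure_occupation_le hφ hmp hI hB hconf

end Occupation

theorem Bornology.IsBounded.exists_volume_inter_preimage_snd_le {E : Type*} [Bornology E]
    [MeasureSpace E] [SigmaFinite (volume : Measure E)] {Ω : Set (ℝ × E)}
    (hΩ : Bornology.IsBounded Ω) :
    ∃ C : ℝ, 0 < C ∧
      ∀ S : Set E, volume (Ω ∩ Prod.snd ⁻¹' S) ≤ ENNReal.ofReal C * volume S := by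
  obtain ⟨r, hr, hΩr⟩ := hΩ.image_fst.subset_closedBall_lt 0 0
  refine ⟨2 * r, by positivity, fun S => ?_⟩
  calc volume (Ω ∩ Prod.snd ⁻¹' S) ≤ volume (Metric.closedBall (0 : ℝ) r ×ˢ S) :=
        measure_mono fun p hp => ⟨hΩr (mem_image_of_mem _ hp.1), hp.2⟩
    _ = ENNReal.ofReal (2 * r) * volume S := by
        rw [Measure.volume_eq_prod, Measure.prod_prod, Real.volume_closedBall]

theorem ENNReal.le_ofReal_div_of_ofReal_mul_le {x : ℝ≥0∞} {a b : ℝ} (ha : 0 < a)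
    (h : ENNReal.ofReal a * x ≤ ENNReal.ofReal b) : x ≤ ENNReal.ofReal (b / a) := by
  rw [ofReal_div_of_pos ha,
    ENNReal.le_div_iff_mul_le (.inl (ofReal_pos.2 ha).ne') (.inl ofReal_ne_top), mul_comm]
  exact h

theorem occupation_time_bound_general
    (d : ℕ) (T : ℝ) (hT : 0 < T)
    (Ω Ω' : Set (ℝ × EuclideanSpace ℝ (Fin d)))
    (hΩ' : IsCompact Ω') (Cα : ℝ) (hCα : 0 < Cα) :
    ∃ C' : ℝ, 0 < C' ∧
      ∀ (α : EuclideanSpace ℝ (Fin d) → ℝ) (L : NNReal), LipschitzWith L α →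
        (∀ (w η : ℝ), 0 < η →
          volume {v : EuclideanSpace ℝ (Fin d) | |α v - w| ≤ η}
            ≤ ENNReal.ofReal (Cα * η)) →
      ∀ (φ : ℝ → (ℝ × EuclideanSpace ℝ (Fin d)) → (ℝ × EuclideanSpace ℝ (Fin d))),
        Measurable (Function.uncurry φ) →
        (∀ t : ℝ, MeasurePreserving (φ t) volume volume) →
        (∀ p ∈ Ω, ∀ t ∈ Set.Icc (0:ℝ) T, φ t p ∈ Ω') →
      ∀ (w η K : ℝ), 0 < η → 0 < K →
        volume {p | p ∈ Ω ∧
            ENNReal.ofReal (K * η)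
              ≤ volume {t ∈ Set.Icc (0:ℝ) T | |α (φ t p).2 - w| ≤ η}}
          ≤ ENNReal.ofReal (C' / K) := by
  obtain ⟨C, hC, hslab⟩ := hΩ'.isBounded.exists_volume_inter_preimage_snd_le
  refine ⟨T * C * Cα, by positivity, ?_⟩
  intro α L hL hnd φ hφ hmp hconf w η K hη hK
  have hS : MeasurableSet {v : EuclideanSpace ℝ (Fin d) | |α v - w| ≤ η} :=
    measurableSet_le (hL.continuous.measurable.sub_const w).abs measurable_const
  rw [← mul_div_mul_right _ _ hη.ne']
  refine ENNReal.le_ofReal_div_of_ofReal_mul_le (by positivity) ?_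
  calc ENNReal.ofReal (K * η) * volume {p | p ∈ Ω ∧
          ENNReal.ofReal (K * η) ≤ volume {t ∈ Icc (0:ℝ) T | |α (φ t p).2 - w| ≤ η}}
      ≤ volume (Icc 0 T) * volume (Ω' ∩ Prod.snd ⁻¹' {v | |α v - w| ≤ η}) :=
        mul_measure_occupation_ge_le hφ (fun t _ => hmp t) measurableSet_Icc
          (measurable_snd hS) hconf _
    _ ≤ ENNReal.ofReal T * (ENNReal.ofReal C * ENNReal.ofReal (Cα * η)) := by
        rw [Real.volume_Icc, sub_zero]
        gcongr
        exact (hslab _).trans (by gcongr; exact hnd w η hη)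
    _ = ENNReal.ofReal (T * C * Cα * η) := by
        rw [← ofReal_mul hC.le, ← ofReal_mul hT.le]
        ring_nf

/-- occupation-time bound near a resonant velocity: for a
measure-preserving flow on `ℝ × ℝ^d` with trajectories from the compact `Ω` staying in
the compact `Ω̃`, and `α` Lipschitz satisfying the nondegeneracy
`|{v : |α(v)-w| ≤ η}| ≤ Cη`, the set
`ω(w,η,K) = {(x,v) ∈ Ω : |{t ∈ [0,T] : |α(V(t,x,v)) - w| ≤ η}| ≥ Kη}`
has measure at most `C'/K`, with `C'` depending only on `T`, `Ω̃`, `C`. -/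
theorem occupation_time_bound
    (d : ℕ) (T : ℝ) (hT : 0 < T)
    (Ω Ω' : Set (ℝ × EuclideanSpace ℝ (Fin d)))
    (hΩ : IsCompact Ω) (hΩ' : IsCompact Ω') (Cα : ℝ) (hCα : 0 < Cα) :
    ∃ C' : ℝ, 0 < C' ∧
      ∀ (α : EuclideanSpace ℝ (Fin d) → ℝ) (L : NNReal), LipschitzWith L α →
        (∀ (w η : ℝ), 0 < η →
          volume {v : EuclideanSpace ℝ (Fin d) | |α v - w| ≤ η}
            ≤ ENNReal.ofReal (Cα * η)) →
      ∀ (φ : ℝ → (ℝ × EuclideanSpace ℝ (Fin d)) → (ℝ × EuclideanSpace ℝ (Fin d))),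
        Measurable (Function.uncurry φ) →
        (∀ t : ℝ, MeasurePreserving (φ t) volume volume) →
        (∀ p ∈ Ω, ∀ t ∈ Set.Icc (0:ℝ) T, φ t p ∈ Ω') →
      ∀ (w η K : ℝ), 0 < η → 0 < K →
        volume {p | p ∈ Ω ∧
            ENNReal.ofReal (K * η)
              ≤ volume {t ∈ Set.Icc (0:ℝ) T | |α (φ t p).2 - w| ≤ η}}
          ≤ ENNReal.ofReal (C' / K) :=
  occupation_time_bound_general d T hT Ω Ω' hΩ' Cα hCα
end

section
/- (Occupation-time bound near countably many resonant velocities) In the setting of the previous lemma, let (ξ_n) be a sequence of real numbers and (a_n) positive reals with Σ a_n < ∞. Define ω(η,K) = {(x,v) ∈ Ω : |{t ∈ [0,T] : ∃n, |α(V(t,x,v)) - ξ_n| ≤ a_n η}| ≥ Kη}. Then |ω(η,K)| ≤ C/K with C depending on T, Ω̃ and Σ a_n but not on η or K. -/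
/-!
Each resonant velocity `ξ_n` contributes a slab `{|α(v) - ξ_n| ≤ a_n η}` of measure at most
`C_α a_n η`; since the trajectories stay in the bounded set `Ω̃`, the union of the slabs meets `Ω̃`
in measure `O((Σ a_n) η)`. The flow preserves measure, so by Tonelli the occupation time of this
set, integrated over phase space, equals `T` times its measure, i.e. `O(η)`; Markov's
inequality at level `Kη` then gives the bound `C / K`.
-/

open MeasureTheory Set

section OccupationTime

variable {X : Type*} [MeasurableSpace X] {μ : Measure X} {φ : ℝ → X → X} {I : Set ℝ} {B : Set X}

noncomputable def occupationTime (φ : ℝ → X → X) (I : Set ℝ) (B : Set X) (p : X) : ENNReal :=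
  volume {t ∈ I | φ t p ∈ B}

theorem measurableSet_occupationTime_graph (hφ : Measurable (Function.uncurry φ))
    (hI : MeasurableSet I) (hB : MeasurableSet B) :
    MeasurableSet {q : X × ℝ | q.2 ∈ I ∧ φ q.2 q.1 ∈ B} :=
  (measurable_snd hI).inter (hφ.comp measurable_swap hB)

theorem measurable_occupationTime (hφ : Measurable (Function.uncurry φ))
    (hI : MeasurableSet I) (hB : MeasurableSet B) : Measurable (occupationTime φ I B) :=
  measurable_measure_prodMk_left (measurableSet_occupationTime_graph hφ hI hB)

theorem lintegral_occupationTime [SFinite μ] (hφ : Measurable (Function.uncurry φ))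
    (hφμ : ∀ t, MeasurePreserving (φ t) μ μ) (hI : MeasurableSet I) (hB : MeasurableSet B) :
    ∫⁻ p, occupationTime φ I B p ∂μ = μ B * volume I := by
  have hslice : ∀ t, μ {p | t ∈ I ∧ φ t p ∈ B} = I.indicator (fun _ => μ B) t := by
    intro t
    by_cases ht : t ∈ I
    · simp only [ht, true_and, indicator_of_mem]
      exact (hφμ t).measure_preimage hB.nullMeasurableSet
    · simp [ht]
  calc ∫⁻ p, occupationTime φ I B p ∂μ
      = μ.prod volume {q : X × ℝ | q.2 ∈ I ∧ φ q.2 q.1 ∈ B} :=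
        (Measure.prod_apply (measurableSet_occupationTime_graph hφ hI hB)).symm
    _ = ∫⁻ t, I.indicator (fun _ => μ B) t := by
        rw [Measure.prod_apply_symm (measurableSet_occupationTime_graph hφ hI hB)]
        exact lintegral_congr fun t => hslice t
    _ = μ B * volume I := lintegral_indicator_const hI _

theorem measure_le_occupationTime_le [SFinite μ] (hφ : Measurable (Function.uncurry φ))
    (hφμ : ∀ t, MeasurePreserving (φ t) μ μ) (hI : MeasurableSet I) (hB : MeasurableSet B)
    {c : ENNReal} (hc : c ≠ 0) (hc' : c ≠ ⊤) :
    μ {p | c ≤ occupationTime φ I B p} ≤ μ B * volume I / c := by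
  rw [← lintegral_occupationTime hφ hφμ hI hB]
  exact meas_ge_le_lintegral_div (measurable_occupationTime hφ hI hB).aemeasurable hc hc'

end OccupationTime

theorem measure_iUnion_abs_sub_le_le {V : Type*} [MeasurableSpace V] {ν : Measure V} {f : V → ℝ}
    {Cf : ℝ} (hCf : 0 ≤ Cf)
    (hf : ∀ w η : ℝ, 0 < η → ν {v | |f v - w| ≤ η} ≤ ENNReal.ofReal (Cf * η))
    (ξ : ℕ → ℝ) {a : ℕ → ℝ} (ha : ∀ n, 0 < a n) (hsum : Summable a) {η : ℝ} (hη : 0 < η) :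
    ν (⋃ n, {v | |f v - ξ n| ≤ a n * η}) ≤ ENNReal.ofReal (Cf * (∑' n, a n) * η) := by
  calc ν (⋃ n, {v | |f v - ξ n| ≤ a n * η})
      ≤ ∑' n, ν {v | |f v - ξ n| ≤ a n * η} := measure_iUnion_le _
    _ ≤ ∑' n, ENNReal.ofReal (Cf * η * a n) :=
        ENNReal.tsum_le_tsum fun n => by
          simpa only [mul_comm, mul_left_comm] using hf (ξ n) (a n * η) (mul_pos (ha n) hη)
    _ = ENNReal.ofReal (Cf * (∑' n, a n) * η) := by
        rw [← ENNReal.ofReal_tsum_of_nonneg (fun n => by have := ha n; positivity)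
          (hsum.mul_left _), tsum_mul_left]
        ring_nf

theorem IsCompact.exists_pos_subset_Icc_prod_univ {β : Type*} [TopologicalSpace β]
    {K : Set (ℝ × β)} (hK : IsCompact K) : ∃ R, 0 < R ∧ K ⊆ Icc (-R) R ×ˢ univ := by
  obtain ⟨R, hR, hsub⟩ := (hK.image continuous_fst).isBounded.subset_closedBall_lt 0 0
  refine ⟨R, hR, fun q hq => ⟨?_, mem_univ _⟩⟩
  simpa [Real.closedBall_eq_Icc] using hsub (mem_image_of_mem Prod.fst hq)

theorem volume_inter_snd_preimage_le {β : Type*} [MeasureSpace β] {K : Set (ℝ × β)} {R : ℝ}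
    (hK : K ⊆ Icc (-R) R ×ˢ univ) (V : Set β) :
    volume (K ∩ Prod.snd ⁻¹' V) ≤ ENNReal.ofReal (2 * R) * volume V := by
  calc volume (K ∩ Prod.snd ⁻¹' V)
      ≤ volume (Icc (-R) R ×ˢ V) := measure_mono fun q hq => ⟨(hK hq.1).1, hq.2⟩
    _ ≤ volume (Icc (-R) R) * volume V := Measure.prod_prod_le _ _
    _ = ENNReal.ofReal (2 * R) * volume V := by
        rw [Real.volume_Icc, sub_neg_eq_add, ← two_mul]

theorem occupation_time_bound_countable_general
    (d : ℕ) (T : ℝ) (hT : 0 < T)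
    (Ω Ω' : Set (ℝ × EuclideanSpace ℝ (Fin d)))
    (hΩ' : IsCompact Ω') (Cα : ℝ) (hCα : 0 < Cα)
    (a : ℕ → ℝ) (ha : ∀ n, 0 < a n) (hsum : Summable a) :
    ∃ C : ℝ, 0 < C ∧
      ∀ (ξ : ℕ → ℝ)
        (α : EuclideanSpace ℝ (Fin d) → ℝ) (L : NNReal), LipschitzWith L α →
        (∀ (w η : ℝ), 0 < η →
          volume {v : EuclideanSpace ℝ (Fin d) | |α v - w| ≤ η}
            ≤ ENNReal.ofReal (Cα * η)) →
      ∀ (φ : ℝ → (ℝ × EuclideanSpace ℝ (Fin d)) → (ℝ × EuclideanSpace ℝ (Fin d))),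
        Measurable (Function.uncurry φ) →
        (∀ t : ℝ, MeasurePreserving (φ t) volume volume) →
        (∀ p ∈ Ω, ∀ t ∈ Set.Icc (0:ℝ) T, φ t p ∈ Ω') →
      ∀ (η K : ℝ), 0 < η → 0 < K →
        volume {p | p ∈ Ω ∧
            ENNReal.ofReal (K * η)
              ≤ volume {t ∈ Set.Icc (0:ℝ) T | ∃ n, |α (φ t p).2 - ξ n| ≤ a n * η}}
          ≤ ENNReal.ofReal (C / K) := by
  obtain ⟨R, hR, hΩ'R⟩ := hΩ'.exists_pos_subset_Icc_prod_univ
  have hA : 0 < ∑' n, a n := hsum.tsum_pos (fun n => (ha n).le) 0 (ha 0)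
  refine ⟨2 * R * Cα * (∑' n, a n) * T, by positivity, ?_⟩
  intro ξ α L hL hα φ hφ hφvol hΩΩ' η K hη hK
  set V := ⋃ n, {v | |α v - ξ n| ≤ a n * η}
  have hV : MeasurableSet V := MeasurableSet.iUnion fun n =>
    measurableSet_le (hL.continuous.measurable.sub measurable_const).abs measurable_const
  have hB : volume (Ω' ∩ Prod.snd ⁻¹' V) ≤ ENNReal.ofReal (2 * R * (Cα * (∑' n, a n) * η)) := by
    rw [ENNReal.ofReal_mul (by positivity)]
    exact (volume_inter_snd_preimage_le hΩ'R V).trans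
      (by gcongr; exact measure_iUnion_abs_sub_le_le hCα.le hα ξ ha hsum hη)
  have hsub : {p | p ∈ Ω ∧ ENNReal.ofReal (K * η)
      ≤ volume {t ∈ Icc (0:ℝ) T | ∃ n, |α (φ t p).2 - ξ n| ≤ a n * η}}
      ⊆ {p | ENNReal.ofReal (K * η) ≤ occupationTime φ (Icc 0 T) (Ω' ∩ Prod.snd ⁻¹' V) p} :=
    fun p ⟨hp, hle⟩ => hle.trans <| measure_mono fun t ⟨ht, n, hn⟩ =>
      ⟨ht, hΩΩ' p hp t ht, mem_iUnion.2 ⟨n, hn⟩⟩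
  calc _ ≤ _ := measure_mono hsub
    _ ≤ volume (Ω' ∩ Prod.snd ⁻¹' V) * volume (Icc (0:ℝ) T) / ENNReal.ofReal (K * η) :=
        measure_le_occupationTime_le hφ hφvol measurableSet_Icc
          (hΩ'.isClosed.measurableSet.inter (measurable_snd hV))
          (ENNReal.ofReal_pos.2 (by positivity)).ne' ENNReal.ofReal_ne_top
    _ ≤ ENNReal.ofReal (2 * R * (Cα * (∑' n, a n) * η)) * ENNReal.ofReal T
          / ENNReal.ofReal (K * η) := by
        rw [Real.volume_Icc, sub_zero]
        gcongr
    _ = ENNReal.ofReal (2 * R * Cα * (∑' n, a n) * T / K) := by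
        rw [← ENNReal.ofReal_mul (by positivity), ← ENNReal.ofReal_div_of_pos (by positivity)]
        congr 1
        field_simp

/-- occupation-time bound near countably many resonant velocities:
in the setting of the single-resonance occupation-time lemma, for speeds `(ξ_n)` and
positive weights `(a_n)` with `Σ a_n < ∞`, the set
`ω(η,K) = {(x,v) ∈ Ω : |{t ∈ [0,T] : ∃n, |α(V(t,x,v)) - ξ_n| ≤ a_n η}| ≥ Kη}`
has measure at most `C/K`, with `C` depending on `T`, `Ω̃` and `Σ a_n` but not on
`η` or `K`. -/
theorem occupation_time_bound_countable
    (d : ℕ) (T : ℝ) (hT : 0 < T)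
    (Ω Ω' : Set (ℝ × EuclideanSpace ℝ (Fin d)))
    (hΩ : IsCompact Ω) (hΩ' : IsCompact Ω') (Cα : ℝ) (hCα : 0 < Cα)
    (a : ℕ → ℝ) (ha : ∀ n, 0 < a n) (hsum : Summable a) :
    ∃ C : ℝ, 0 < C ∧
      ∀ (ξ : ℕ → ℝ)
        (α : EuclideanSpace ℝ (Fin d) → ℝ) (L : NNReal), LipschitzWith L α →
        (∀ (w η : ℝ), 0 < η →
          volume {v : EuclideanSpace ℝ (Fin d) | |α v - w| ≤ η}
            ≤ ENNReal.ofReal (Cα * η)) →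
      ∀ (φ : ℝ → (ℝ × EuclideanSpace ℝ (Fin d)) → (ℝ × EuclideanSpace ℝ (Fin d))),
        Measurable (Function.uncurry φ) →
        (∀ t : ℝ, MeasurePreserving (φ t) volume volume) →
        (∀ p ∈ Ω, ∀ t ∈ Set.Icc (0:ℝ) T, φ t p ∈ Ω') →
      ∀ (η K : ℝ), 0 < η → 0 < K →
        volume {p | p ∈ Ω ∧
            ENNReal.ofReal (K * η)
              ≤ volume {t ∈ Set.Icc (0:ℝ) T | ∃ n, |α (φ t p).2 - ξ n| ≤ a n * η}}
          ≤ ENNReal.ofReal (C / K) :=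
  occupation_time_bound_countable_general d T hT Ω Ω' hΩ' Cα hCα a ha hsum
end
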